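/- arXiv:1511.03879 — 2 statements merged into one kernel-verified Lean document; each statement's English description precedes it below -/
import Mathlib

section
/- For all integers k ≥ 8 and x ≥ 1, the polynomial P_{B_k}(x) = x²(ε − 2 + ⌊k(k−3)/6⌋) − 2x(1 + ⌊k(k−3)/6⌋) + 4(1 + ⌊k(k−3)/6⌋) is strictly positive, with minimum value 20 attained at k = 8, x = 1, where ε ∈ {0, 2} equals 0 if k ≡ 0 mod 3 and 2 otherwise. -/
/-!
Write `P(x) = x²(ε − 2 + m) − 2x(1 + m) + 4(1 + m)` with `m = ⌊k(k−3)/6⌋`. Then `P(1) = ε + 3m` and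
`P(x) − P(1) = (x − 1)(x − 2)(m + ε − 2) + (x − 1)(m + 3ε − 8)`, which is nonnegative at every integer
`x ≥ 1` as soon as `m + ε ≥ 2` and `m + 3ε ≥ 8`. For `k ≥ 8` one has `m ≥ 6`, and `m ≥ 9` when `3 ∣ k`
(then `k ≥ 9`), so `P(x) ≥ P(1) = ε + 3m ≥ 20`, with equality for `k = 8`, `x = 1`.
-/

def boroczkyPoly (ε m x : ℤ) : ℤ :=
  x ^ 2 * (ε - 2 + m) - 2 * x * (1 + m) + 4 * (1 + m)

def boroczkyEps (k : ℕ) : ℤ :=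
  if k % 3 = 0 then 0 else 2

namespace boroczkyPoly

theorem eval_one (ε m : ℤ) : boroczkyPoly ε m 1 = ε + 3 * m := by
  unfold boroczkyPoly; ring

theorem sub_eval_one (ε m x : ℤ) :
    boroczkyPoly ε m x - boroczkyPoly ε m 1 =
      (x - 1) * (x - 2) * (m + ε - 2) + (x - 1) * (m + 3 * ε - 8) := by
  unfold boroczkyPoly; ring

theorem eval_one_le {ε m x : ℤ} (hx : 1 ≤ x) (h₁ : 2 ≤ m + ε) (h₂ : 8 ≤ m + 3 * ε) :
    boroczkyPoly ε m 1 ≤ boroczkyPoly ε m x := by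
  have hx₁₂ : 0 ≤ (x - 1) * (x - 2) := by
    rcases hx.eq_or_lt with rfl | hx'
    · norm_num
    · exact mul_nonneg (by linarith) (by linarith)
  have := sub_eval_one ε m x
  nlinarith [mul_nonneg hx₁₂ (sub_nonneg.2 h₁), mul_nonneg (sub_nonneg.2 hx) (sub_nonneg.2 h₂)]

end boroczkyPoly

theorem six_le_mul_sub_three_div_six {k : ℕ} (hk : 8 ≤ k) : 6 ≤ k * (k - 3) / 6 :=
  (Nat.le_div_iff_mul_le (by norm_num)).2 (by nlinarith [Nat.sub_add_cancel (by omega : 3 ≤ k)])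

theorem nine_le_mul_sub_three_div_six {k : ℕ} (hk : 9 ≤ k) : 9 ≤ k * (k - 3) / 6 :=
  (Nat.le_div_iff_mul_le (by norm_num)).2 (by nlinarith [Nat.sub_add_cancel (by omega : 3 ≤ k)])

theorem twenty_le_boroczkyPoly {k : ℕ} {x : ℤ} (hk : 8 ≤ k) (hx : 1 ≤ x) :
    20 ≤ boroczkyPoly (boroczkyEps k) (k * (k - 3) / 6 : ℕ) x := by
  have hm₆ := six_le_mul_sub_three_div_six hk
  have hm₉ (h3 : k % 3 = 0) := nine_le_mul_sub_three_div_six (by omega : 9 ≤ k)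
  generalize k * (k - 3) / 6 = m at *
  obtain ⟨h₁, h₂, h₂₀⟩ : 2 ≤ (m : ℤ) + boroczkyEps k ∧ 8 ≤ (m : ℤ) + 3 * boroczkyEps k ∧
      20 ≤ boroczkyEps k + 3 * (m : ℤ) := by
    unfold boroczkyEps
    split_ifs with h3
    · have := hm₉ h3; omega
    · omega
  calc 20 ≤ boroczkyEps k + 3 * (m : ℤ) := h₂₀
    _ = boroczkyPoly (boroczkyEps k) m 1 := (boroczkyPoly.eval_one _ _).symm
    _ ≤ boroczkyPoly (boroczkyEps k) m x := boroczkyPoly.eval_one_le hx h₁ h₂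

/-- For all integers `k ≥ 8` and `x ≥ 1`, the polynomial
`P_{B_k}(x) = x²(ε − 2 + ⌊k(k−3)/6⌋) − 2x(1 + ⌊k(k−3)/6⌋) + 4(1 + ⌊k(k−3)/6⌋)`
is strictly positive, with minimum value `20` attained at `k = 8`, `x = 1`, where
`ε = 0` if `k ≡ 0 (mod 3)` and `ε = 2` otherwise. -/
theorem boroczky_kummer_not_ball_quotient :
    (∀ k : ℕ, ∀ x : ℤ, 8 ≤ k → 1 ≤ x →
      0 < x ^ 2 * ((if k % 3 = 0 then (0 : ℤ) else 2) - 2 + (k * (k - 3) / 6 : ℕ)) -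
          2 * x * (1 + (k * (k - 3) / 6 : ℕ)) + 4 * (1 + (k * (k - 3) / 6 : ℕ))) ∧
    (∀ k : ℕ, ∀ x : ℤ, 8 ≤ k → 1 ≤ x →
      20 ≤ x ^ 2 * ((if k % 3 = 0 then (0 : ℤ) else 2) - 2 + (k * (k - 3) / 6 : ℕ)) -
          2 * x * (1 + (k * (k - 3) / 6 : ℕ)) + 4 * (1 + (k * (k - 3) / 6 : ℕ))) ∧
    ((1 : ℤ) ^ 2 * ((if (8 : ℕ) % 3 = 0 then (0 : ℤ) else 2) - 2 + ((8 * (8 - 3) / 6 : ℕ))) -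
        2 * 1 * (1 + ((8 * (8 - 3) / 6 : ℕ))) + 4 * (1 + ((8 * (8 - 3) / 6 : ℕ)))) = 20 := by
  exact ⟨fun _ _ hk hx => lt_of_lt_of_le (by norm_num) (twenty_le_boroczkyPoly hk hx),
    fun _ _ hk hx => twenty_le_boroczkyPoly hk hx, by norm_num⟩
end

section
/- Let d ≥ 3 and let (k, (t_r)) be the data of a d-configuration satisfying the combinatorial equality d²(k²−k) = Σ(r²−r)t_r and the Hirzebruch-type inequality (7/2 d² − 9/2 d)k + t_2 + t_3 ≥ Σ_{r≥4}(r−4)t_r. If additionally 3 + 6dk − 5d²k + f_1 − 4f_0 ≥ 0 (with f_0 = Σ t_r, f_1 = Σ r t_r), then 2t_2 ≤ 6 + 3dk(1−d) < 0, a contradiction; hence 3 + 6dk − 5d²k + f_1 − 4f_0 < 0. -/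
/-!
Since `f₁ − 4f₀ = −2t₂ − t₃ + Σ_{r≥4} (r − 4) t_r`, the Hirzebruch-type inequality bounds the
left-hand side by `3 − (3/2) d (d − 1) k − t₂`, which is negative because `d (d − 1) k ≥ 24`.
-/

open Finset

theorem Finset.sum_Icc_two_eq_add_add_sum_Icc_four {M : Type*} [AddCommMonoid M] (f : ℕ → M)
    {k : ℕ} (hk : 3 ≤ k) :
    ∑ r ∈ Icc 2 k, f r = f 2 + f 3 + ∑ r ∈ Icc 4 k, f r := by
  rw [← add_sum_Ioc_eq_sum_Icc (by omega), ← Icc_add_one_left_eq_Ioc,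
    ← add_sum_Ioc_eq_sum_Icc (a := 2 + 1) hk, ← Icc_add_one_left_eq_Ioc]
  exact (add_assoc _ _ _).symm

theorem Finset.sum_Icc_two_mul_sub_four_mul_sum {R : Type*} [CommRing R] (t : ℕ → R)
    {k : ℕ} (hk : 3 ≤ k) :
    ∑ r ∈ Icc 2 k, (r : R) * t r - 4 * ∑ r ∈ Icc 2 k, t r =
      -2 * t 2 - t 3 + ∑ r ∈ Icc 4 k, ((r : R) - 4) * t r := by
  have hdiff : ∑ r ∈ Icc 2 k, (r : R) * t r - 4 * ∑ r ∈ Icc 2 k, t r =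
      ∑ r ∈ Icc 2 k, ((r : R) - 4) * t r := by
    rw [mul_sum, ← sum_sub_distrib]
    exact sum_congr rfl fun r _ => by ring
  rw [hdiff, sum_Icc_two_eq_add_add_sum_Icc_four _ hk]
  push_cast
  ring

theorem d_configuration_key_inequality_general
    (d k : ℕ) (hd : 3 ≤ d) (hk : 4 ≤ k) (t : ℕ → ℕ)
    (hhirz : ((7 / 2) * (d : ℚ) ^ 2 - (9 / 2) * d) * k + t 2 + t 3 ≥
      ∑ r ∈ Finset.Icc 4 k, ((r : ℚ) - 4) * t r) :
    3 + 6 * (d : ℚ) * k - 5 * (d : ℚ) ^ 2 * k +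
        (∑ r ∈ Finset.Icc 2 k, (r : ℚ) * t r) -
        4 * (∑ r ∈ Finset.Icc 2 k, (t r : ℚ)) < 0 := by
  have hsplit := sum_Icc_two_mul_sub_four_mul_sum (fun r => (t r : ℚ)) (k := k) (by omega)
  have hd' : (3 : ℚ) ≤ d := by exact_mod_cast hd
  have hk' : (4 : ℚ) ≤ k := by exact_mod_cast hk
  have hdk : 24 ≤ (d : ℚ) * (d - 1) * k := by
    have : 6 ≤ (d : ℚ) * (d - 1) := by nlinarith
    nlinarith
  have ht₂ : (0 : ℚ) ≤ t 2 := (t 2).cast_nonneg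
  linarith

/-- Let `d ≥ 3`, `k ≥ 4`, and let `(k, (t_r))` be the combinatorial
data of a `d`-configuration: `t_r ≥ 0`, the combinatorial equality
`d²(k²−k) = Σ_{r≥2}(r²−r)t_r` and the Hirzebruch-type inequality
`(7/2 d² − 9/2 d)k + t₂ + t₃ ≥ Σ_{r≥4}(r−4)t_r` hold. Then with
`f₀ = Σ t_r`, `f₁ = Σ r t_r` one has `3 + 6dk − 5d²k + f₁ − 4f₀ < 0`. -/
theorem d_configuration_key_inequality
    (d k : ℕ) (hd : 3 ≤ d) (hk : 4 ≤ k) (t : ℕ → ℕ)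
    (hcomb : (d : ℚ) ^ 2 * ((k : ℚ) ^ 2 - k) =
      ∑ r ∈ Finset.Icc 2 k, ((r : ℚ) ^ 2 - r) * t r)
    (hhirz : ((7 / 2) * (d : ℚ) ^ 2 - (9 / 2) * d) * k + t 2 + t 3 ≥
      ∑ r ∈ Finset.Icc 4 k, ((r : ℚ) - 4) * t r) :
    3 + 6 * (d : ℚ) * k - 5 * (d : ℚ) ^ 2 * k +
        (∑ r ∈ Finset.Icc 2 k, (r : ℚ) * t r) -
        4 * (∑ r ∈ Finset.Icc 2 k, (t r : ℚ)) < 0 :=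
  d_configuration_key_inequality_general d k hd hk t hhirz
end
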